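/- Let d ≥ 0, Δ = 2^d, n ≥ 1, let k ≥ 1 be a power of two, and let a, b : {1,…,n} → {1,…,Δ}² be sequences of points such that the multiset T has at most k distinct points and a(i) ≠ b(j) for all i, j. For each j ∈ {0,…,d}, let (2^j, v_j) be a grid with cell size 2^j and arbitrary shift v_j ∈ {0,…,2^j−1}², and set Y = (1/2)·Σ_{j=0}^{d} 2^j·D_{2^j,v_j}(a,b). Then EMD(a,b) ≤ 4k²·Y. -/

import Mathlib

/-- ℓ1 norm on ℤ². -/
def l1 (p : ℤ × ℤ) : ℤ := |p.1| + |p.2|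

/-- Earth-mover distance between the multisets {a 1,…,a n} and {b 1,…,b n}:
the minimum over permutations σ of ∑ i, ‖a i − b (σ i)‖₁. -/
noncomputable def EMD {n : ℕ} (a b : Fin n → ℤ × ℤ) : ℤ :=
  Finset.univ.inf' Finset.univ_nonempty
    (fun σ : Equiv.Perm (Fin n) => ∑ i, l1 (a i - b (σ i)))

/-- The grid cell of a point p for the grid of cell size L shifted by v
(floor division; `/` on ℤ with positive divisor is floor division). -/
def cell (L : ℕ) (v p : ℤ × ℤ) : ℤ × ℤ :=
  ((p.1 - v.1) / (L : ℤ), (p.2 - v.2) / (L : ℤ))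

/-- The grid ℓ1-difference D_{L,v}(a,b) = Σ_{c∈ℤ²} |#{i : cell(a i) = c} − #{i : cell(b i) = c}|,
where the (finite) sum is taken over the cells actually occupied (all other terms vanish). -/
def D {n : ℕ} (L : ℕ) (v : ℤ × ℤ) (a b : Fin n → ℤ × ℤ) : ℤ :=
  ∑ c ∈ ((Finset.univ.image fun i => cell L v (a i)) ∪
         (Finset.univ.image fun i => cell L v (b i))),
    |((Finset.univ.filter fun i => cell L v (a i) = c).card : ℤ) -
      ((Finset.univ.filter fun i => cell L v (b i) = c).card : ℤ)|

/-!
A partial matching is a permutation `σ` together with the set `s` of sources it matches, source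
`i ∈ s` going to target `σ i`. If a larger partial matching has all its edges of cost at most `C`,
an alternating path leads from one of its sources left unmatched by `σ` to an unmatched target.
Followed through the values of `b` rather than through indices, a shortest such path visits each of
the at most `k` points of `T` once, so rerouting along it enlarges the matching by one at extra cost
at most `k * C`.

At cell size `2 ^ j`, matching points inside common cells gives a partial matching with edges of
cost at most `2 ^ (j + 1)` that misses at most `D_j / 2` points. Augmenting towards it does not
increase the potential `cost + k * 2 ^ (j + 1) * #(unmatched sources)`, and doubling the weight
when passing to level `j + 1` adds at most `k * 2 ^ j * D_j`. The potential starts at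
`2 * k * n ≤ k * D_0` because `S` and `T` are disjoint, and at level `d` every point can be matched
inside the box of side `2 ^ d`; hence `EMD ≤ 2 * k * ∑ j, 2 ^ j * D_j = 4 * k * Y`.
-/

open Finset Relation

theorem Relation.ReflTransGen.avoiding_start {α : Type*} {r : α → α → Prop} {a c : α}
    (h : ReflTransGen r a c) : ReflTransGen (fun x y => r x y ∧ y ≠ a) a c := by
  induction h with
  | refl => exact .refl
  | @tail x y _ hxy ih =>
    by_cases hy : y = a
    · exact hy ▸ .refl
    · exact ih.tail ⟨hxy, hy⟩

theorem Relation.ReflTransGen.mono_of_invariant {α : Type*} {r r' : α → α → Prop} {W : Set α}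
    {a c : α} (h : ReflTransGen r a c) (ha : a ∈ W) (hr : ∀ x ∈ W, ∀ y, r x y → r' x y ∧ y ∈ W) :
    ReflTransGen r' a c := by
  induction h using ReflTransGen.head_induction_on with
  | refl => exact .refl
  | head hxy _ ih =>
    obtain ⟨hxy', hy⟩ := hr _ ha _ hxy
    exact .head hxy' (ih hy)

section Fibers

variable {ι κ : Type*} [Fintype ι] [DecidableEq κ] (f g : ι → κ)

def fiberImbalance : ℤ :=
  ∑ c ∈ univ.image f ∪ univ.image g, |(#{i | f i = c} : ℤ) - #{i | g i = c}|

lemma sum_card_fiber_eq_card {U : Finset κ} (hU : ∀ i, f i ∈ U) :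
    ∑ c ∈ U, #{i | f i = c} = Fintype.card ι :=
  (card_eq_sum_card_fiberwise fun i _ => hU i).symm

lemma fiberImbalance_eq :
    fiberImbalance f g = 2 * Fintype.card ι -
      2 * ∑ c ∈ univ.image f ∪ univ.image g, (min #{i | f i = c} #{i | g i = c} : ℕ) := by
  have habs : ∀ x y : ℕ, |(x : ℤ) - y| = x + y - 2 * (min x y : ℕ) := fun x y => by
    rw [← max_sub_min_eq_abs]
    omega
  have hf : ∑ c ∈ univ.image f ∪ univ.image g, (#{i | f i = c} : ℤ) = Fintype.card ι := by
    exact_mod_cast sum_card_fiber_eq_card f fun i => by simp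
  have hg : ∑ c ∈ univ.image f ∪ univ.image g, (#{i | g i = c} : ℤ) = Fintype.card ι := by
    exact_mod_cast sum_card_fiber_eq_card g fun i => by simp
  simp only [fiberImbalance, habs, sum_sub_distrib, sum_add_distrib, ← mul_sum, hf, hg,
    Nat.cast_sum]
  ring

lemma fiberImbalance_of_forall_ne (h : ∀ i j, f i ≠ g j) :
    fiberImbalance f g = 2 * Fintype.card ι := by
  rw [fiberImbalance_eq, sum_eq_zero, Nat.cast_zero, mul_zero, sub_zero]
  intro c _
  by_contra hc
  obtain ⟨i, hi⟩ := card_pos.1 (by omega : 0 < #{i | f i = c})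
  obtain ⟨j, hj⟩ := card_pos.1 (by omega : 0 < #{j | g j = c})
  exact h i j ((mem_filter.1 hi).2.trans (mem_filter.1 hj).2.symm)

variable [DecidableEq ι]

lemma exists_insert_of_card_filter_lt_min {τ : Equiv.Perm ι} {t : Finset ι}
    (hτ : ∀ i ∈ t, f i = g (τ i)) {c : κ}
    (hc : #{i ∈ t | f i = c} < min #{i | f i = c} #{j | g j = c}) :
    ∃ i ∉ t, ∃ τ' : Equiv.Perm ι, ∀ i' ∈ insert i t, f i' = g (τ' i') := by
  obtain ⟨i, hi, hit⟩ := exists_mem_notMem_of_card_lt_card (hc.trans_le (min_le_left _ _))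
  have hfi : f i = c := (mem_filter.1 hi).2
  have hit' : i ∉ t := fun h => hit (mem_filter.2 ⟨h, hfi⟩)
  have hcard : #({i ∈ t | f i = c}.image τ) < #{j | g j = c} := by
    rw [card_image_of_injective _ τ.injective]
    exact hc.trans_le (min_le_right _ _)
  obtain ⟨j, hj, hjt⟩ := exists_mem_notMem_of_card_lt_card hcard
  refine ⟨i, hit', (Equiv.swap i (τ.symm j)).trans τ, fun i' hi' => ?_⟩
  rcases mem_insert.1 hi' with rfl | hi't
  · simp [hfi, (mem_filter.1 hj).2]
  · have h₁ : i' ≠ i := ne_of_mem_of_not_mem hi't hit'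
    have h₂ : i' ≠ τ.symm j := by
      rintro rfl
      refine hjt (mem_image.2 ⟨_, mem_filter.2 ⟨hi't, ?_⟩, τ.apply_symm_apply j⟩)
      rw [hτ _ hi't, τ.apply_symm_apply, (mem_filter.1 hj).2]
    simp [Equiv.swap_apply_of_ne_of_ne h₁ h₂, hτ i' hi't]

lemma exists_perm_two_mul_sub_card_le_fiberImbalance :
    ∃ (τ : Equiv.Perm ι) (t : Finset ι), (∀ i ∈ t, f i = g (τ i)) ∧
      2 * ((Fintype.card ι : ℤ) - #t) ≤ fiberImbalance f g := by
  classical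
  obtain ⟨t, htmem, hmax⟩ := exists_max_image
    {t : Finset ι | ∃ τ : Equiv.Perm ι, ∀ i ∈ t, f i = g (τ i)} card ⟨∅, by simp⟩
  obtain ⟨τ, hτ⟩ := (mem_filter.1 htmem).2
  refine ⟨τ, t, hτ, ?_⟩
  have hmin : ∀ c, min #{i | f i = c} #{j | g j = c} ≤ #{i ∈ t | f i = c} := fun c => by
    by_contra! hc
    obtain ⟨i, hit, τ', hτ'⟩ := exists_insert_of_card_filter_lt_min f g hτ hc
    have := hmax (insert i t) (mem_filter.2 ⟨mem_univ _, τ', hτ'⟩)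
    rw [card_insert_of_notMem hit] at this
    omega
  have ht : #t = ∑ c ∈ univ.image f ∪ univ.image g, #{i ∈ t | f i = c} :=
    card_eq_sum_card_fiberwise fun i _ => by simp
  have hsum := sum_le_sum fun c (_ : c ∈ univ.image f ∪ univ.image g) => hmin c
  rw [← ht] at hsum
  have : ((∑ c ∈ univ.image f ∪ univ.image g, min #{i | f i = c} #{i | g i = c} : ℕ) : ℤ) ≤
      #t := by
    exact_mod_cast hsum
  rw [fiberImbalance_eq]
  linarith

end Fibers

section Matching

variable {ι β : Type*} [DecidableEq ι] (w : ι → β → ℤ) (b : ι → β)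

def matchCost (σ : Equiv.Perm ι) (s : Finset ι) : ℤ := ∑ i ∈ s, w i (b (σ i))

/-- A matched source whose target has value `x` may be rerouted to value `y` at cost at most `C`.
Alternating paths are chains of such steps ending at a value still carried by an unmatched target
(`IsFreeValue`). -/
def AltStep (C : ℤ) (σ : Equiv.Perm ι) (s : Finset ι) (x y : β) : Prop :=
  ∃ j ∈ s, b (σ j) = x ∧ w j y ≤ C

def IsFreeValue (σ : Equiv.Perm ι) (s : Finset ι) (x : β) : Prop :=
  ∃ j ∉ s, b (σ j) = x

variable {w b}

lemma matchCost_swap_le (hw : ∀ i y, 0 ≤ w i y) {σ : Equiv.Perm ι} {s : Finset ι} {i₀ : ι}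
    (hi₀ : i₀ ∉ s) (j : ι) :
    matchCost w b ((Equiv.swap i₀ j).trans σ) (insert i₀ (s.erase j)) ≤
      w i₀ (b (σ j)) + matchCost w b σ s := by
  have hfix : ∀ i ∈ s.erase j, ((Equiv.swap i₀ j).trans σ) i = σ i := fun i hi =>
    congrArg σ (Equiv.swap_apply_of_ne_of_ne (ne_of_mem_of_not_mem (mem_of_mem_erase hi) hi₀)
      (ne_of_mem_erase hi))
  rw [matchCost, sum_insert fun h => hi₀ (mem_of_mem_erase h), sum_congr rfl fun i hi => by
    rw [hfix i hi]]
  simp only [Equiv.trans_apply, Equiv.swap_apply_left]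
  gcongr
  exact sum_le_sum_of_subset_of_nonneg (erase_subset j s) fun i _ _ => hw _ _

lemma AltStep.swap {C : ℤ} {σ : Equiv.Perm ι} {s : Finset ι} {i₀ j : ι} (hi₀ : i₀ ∉ s)
    {x y : β} (h : AltStep w b C σ s x y) (hx : x ≠ b (σ j)) :
    AltStep w b C ((Equiv.swap i₀ j).trans σ) (insert i₀ (s.erase j)) x y := by
  obtain ⟨j', hj's, rfl, hj'⟩ := h
  have hj'j : j' ≠ j := fun h => hx (h ▸ rfl)
  have hj'i₀ : j' ≠ i₀ := ne_of_mem_of_not_mem hj's hi₀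
  refine ⟨j', mem_insert_of_mem (mem_erase.2 ⟨hj'j, hj's⟩), ?_, hj'⟩
  simp [Equiv.swap_apply_of_ne_of_ne hj'i₀ hj'j]

lemma IsFreeValue.swap {σ : Equiv.Perm ι} {s : Finset ι} {i₀ j : ι} (hi₀ : i₀ ∉ s) (hj : j ∈ s)
    {x : β} (h : IsFreeValue b σ s x) :
    IsFreeValue b ((Equiv.swap i₀ j).trans σ) (insert i₀ (s.erase j)) x := by
  obtain ⟨j', hj's, rfl⟩ := h
  have hji₀ : j ≠ i₀ := ne_of_mem_of_not_mem hj hi₀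
  by_cases hj'i₀ : j' = i₀
  · subst hj'i₀
    exact ⟨j, by simp [hji₀], by simp⟩
  · have hj'j : j' ≠ j := fun h => hj's (h ▸ hj)
    refine ⟨j', by simp [hj'i₀, hj's], ?_⟩
    simp [Equiv.swap_apply_of_ne_of_ne hj'i₀ hj'j]

variable [DecidableEq β]

theorem exists_card_succ_matchCost_le_of_reflTransGen (hw : ∀ i y, 0 ≤ w i y) {C : ℤ}
    (V : Finset β) {σ : Equiv.Perm ι} {s : Finset ι} {i₀ : ι} {x₀ c : β} (hi₀ : i₀ ∉ s)
    (hC : w i₀ x₀ ≤ C) (hx₀ : x₀ ∈ V)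
    (hpath : ReflTransGen (fun x y => AltStep w b C σ s x y ∧ y ∈ V) x₀ c)
    (hc : IsFreeValue b σ s c) :
    ∃ (σ' : Equiv.Perm ι) (s' : Finset ι), #s' = #s + 1 ∧
      matchCost w b σ' s' ≤ matchCost w b σ s + #V * C := by
  induction V using Finset.strongInduction generalizing σ s i₀ x₀ with
  | H V ih =>
  have hC₀ : 0 ≤ C := (hw i₀ x₀).trans hC
  -- A path from `x₀` need not return to `x₀`, so once its first step is rerouted the rest of it
  -- lives in `V.erase x₀`.
  rcases hpath.avoiding_start.cases_head with
    rfl | ⟨x₁, ⟨⟨⟨j, hj, hjx₀, hjx₁⟩, hx₁⟩, hx₁x₀⟩, hrest⟩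
  · obtain ⟨j, hj, rfl⟩ := hc
    have hV : (1 : ℤ) ≤ #V := by exact_mod_cast card_pos.2 ⟨_, hx₀⟩
    refine ⟨(Equiv.swap i₀ j).trans σ, insert i₀ (s.erase j), ?_,
      (matchCost_swap_le hw hi₀ j).trans ?_⟩
    · rw [erase_eq_of_notMem hj, card_insert_of_notMem hi₀]
    · nlinarith
  · set σ₁ := (Equiv.swap i₀ j).trans σ
    set s₁ := insert i₀ (s.erase j)
    have hjs₁ : j ∉ s₁ := by
      simp [s₁, (ne_of_mem_of_not_mem hj hi₀)]
    have hcard : #s₁ = #s := by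
      rw [card_insert_of_notMem fun h => hi₀ (mem_of_mem_erase h), card_erase_add_one hj]
    have hpath₁ : ReflTransGen (fun x y => AltStep w b C σ₁ s₁ x y ∧ y ∈ V.erase x₀) x₁ c :=
      hrest.mono_of_invariant (W := ↑(V.erase x₀)) (mem_erase.2 ⟨hx₁x₀, hx₁⟩)
        fun x hx y ⟨⟨h, hy⟩, hyx₀⟩ =>
          have hyV : y ∈ V.erase x₀ := mem_erase.2 ⟨hyx₀, hy⟩
          ⟨⟨h.swap hi₀ (hjx₀ ▸ ne_of_mem_erase hx), hyV⟩, hyV⟩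
    obtain ⟨σ', s', hs', hcost⟩ :=
      ih _ (erase_ssubset hx₀) hjs₁ hjx₁ (mem_erase.2 ⟨hx₁x₀, hx₁⟩) hpath₁ (hc.swap hi₀ hj)
    refine ⟨σ', s', hcard ▸ hs', ?_⟩
    have hcost₁ := matchCost_swap_le (b := b) hw hi₀ (σ := σ) j
    have hV : (#(V.erase x₀) : ℤ) + 1 = #V := by exact_mod_cast card_erase_add_one hx₀
    rw [hjx₀] at hcost₁
    nlinarith

variable [Fintype ι]

theorem exists_isFreeValue_reflTransGen {C : ℤ} {σ τ : Equiv.Perm ι}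
    {s t : Finset ι} (hst : #s < #t) (ht : ∀ i ∈ t, w i (b (τ i)) ≤ C) :
    ∃ i₀ ∈ t, i₀ ∉ s ∧ ∃ c, IsFreeValue b σ s c ∧
      ReflTransGen (fun x y => AltStep w b C σ s x y ∧ y ∈ univ.image b) (b (τ i₀)) c := by
  classical
  -- Otherwise the values reachable from the starts `t \ s` form a set `U` without free values;
  -- `i ↦ σ⁻¹ (τ i)` then injects `A` into `B ⊆ s`, and counting gives `#t ≤ #s`.
  by_contra! hno
  set R := fun x y => AltStep w b C σ s x y ∧ y ∈ univ.image b
  set U : Set β := {y | ∃ i ∈ t, i ∉ s ∧ ReflTransGen R (b (τ i)) y}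
  set A := {i ∈ t | b (τ i) ∈ U}
  set B : Finset ι := {j | b (σ j) ∈ U}
  have hBs : B ⊆ s := fun j hj => by
    by_contra hjs
    obtain ⟨i, hit, his, hi⟩ := (mem_filter.1 hj).2
    exact hno i hit his _ ⟨j, hjs, rfl⟩ hi
  have htsA : t \ s ⊆ A := fun i hi =>
    mem_filter.2 ⟨(mem_sdiff.1 hi).1, i, (mem_sdiff.1 hi).1, (mem_sdiff.1 hi).2, .refl⟩
  have hBtA : B ∩ t ⊆ A := fun j hj => by
    obtain ⟨hjB, hjt⟩ := mem_inter.1 hj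
    obtain ⟨i, hit, his, hi⟩ := (mem_filter.1 hjB).2
    exact mem_filter.2 ⟨hjt, i, hit, his,
      hi.tail ⟨⟨j, hBs hjB, rfl, ht j hjt⟩, mem_image_of_mem b (mem_univ _)⟩⟩
  have hAB : #A ≤ #B := card_le_card_of_injOn (fun i => σ.symm (τ i))
    (fun i hi => by simpa [B] using (mem_filter.1 hi).2)
    (fun i _ i' _ h => τ.injective (σ.symm.injective h))
  have hdisj : Disjoint (t \ s) (B ∩ t) := disjoint_left.2 fun i hi hi' =>
    (mem_sdiff.1 hi).2 (hBs (mem_inter.1 hi').1)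
  have h₁ : #(t \ s) + #(B ∩ t) ≤ #A := by
    rw [← card_union_of_disjoint hdisj]
    exact card_le_card (union_subset htsA hBtA)
  have h₂ : #(B \ t) ≤ #(s \ t) := card_le_card (sdiff_subset_sdiff hBs le_rfl)
  have h₃ := card_inter_add_card_sdiff B t
  have h₄ := card_sdiff_add_card_inter t s
  have h₅ := card_sdiff_add_card_inter s t
  rw [inter_comm] at h₅
  omega


theorem exists_card_succ_matchCost_le (hw : ∀ i y, 0 ≤ w i y) {C : ℤ} {τ : Equiv.Perm ι}
    {t : Finset ι} (ht : ∀ i ∈ t, w i (b (τ i)) ≤ C) (σ : Equiv.Perm ι) {s : Finset ι}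
    (hst : #s < #t) :
    ∃ (σ' : Equiv.Perm ι) (s' : Finset ι), #s' = #s + 1 ∧
      matchCost w b σ' s' ≤ matchCost w b σ s + #(univ.image b) * C := by
  obtain ⟨i₀, hi₀t, hi₀s, c, hc, hpath⟩ := exists_isFreeValue_reflTransGen (σ := σ) hst ht
  exact exists_card_succ_matchCost_le_of_reflTransGen hw _ hi₀s (ht i₀ hi₀t)
    (mem_image_of_mem b (mem_univ _)) hpath hc

theorem exists_card_le_matchCost_sub_le (hw : ∀ i y, 0 ≤ w i y) {C : ℤ} {τ : Equiv.Perm ι}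
    {t : Finset ι} (ht : ∀ i ∈ t, w i (b (τ i)) ≤ C) (σ : Equiv.Perm ι) (s : Finset ι) :
    ∃ (σ' : Equiv.Perm ι) (s' : Finset ι), #t ≤ #s' ∧
      matchCost w b σ' s' - #(univ.image b) * C * #s' ≤
        matchCost w b σ s - #(univ.image b) * C * #s := by
  obtain ⟨m, hm⟩ : ∃ m, #t ≤ #s + m := ⟨#t, by omega⟩
  induction m generalizing σ s with
  | zero => exact ⟨σ, s, hm, le_rfl⟩
  | succ m ih =>
    by_cases hts : #t ≤ #s
    · exact ⟨σ, s, hts, le_rfl⟩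
    obtain ⟨σ₁, s₁, hs₁, hcost₁⟩ := exists_card_succ_matchCost_le hw ht σ (not_le.1 hts)
    obtain ⟨σ', s', hts', hcost'⟩ := ih σ₁ s₁ (by omega)
    refine ⟨σ', s', hts', hcost'.trans ?_⟩
    rw [hs₁]
    push_cast
    linarith

end Matching

lemma l1_nonneg (p : ℤ × ℤ) : 0 ≤ l1 p := add_nonneg (abs_nonneg _) (abs_nonneg _)

lemma abs_sub_lt_of_ediv_eq {L x y : ℤ} (hL : 0 < L) (h : x / L = y / L) : |x - y| < L := by
  have hx := Int.emod_add_mul_ediv x L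
  have hy := Int.emod_add_mul_ediv y L
  have := Int.emod_nonneg x hL.ne'
  have := Int.emod_nonneg y hL.ne'
  have := Int.emod_lt_of_pos x hL
  have := Int.emod_lt_of_pos y hL
  rw [h] at hx
  rw [abs_sub_lt_iff]
  constructor <;> linarith

lemma l1_sub_le_of_cell_eq {L : ℕ} (hL : 0 < L) {v p q : ℤ × ℤ}
    (h : cell L v p = cell L v q) : l1 (p - q) ≤ 2 * L := by
  simp only [cell, Prod.mk.injEq] at h
  have h₁ := abs_sub_lt_of_ediv_eq (by exact_mod_cast hL) h.1
  have h₂ := abs_sub_lt_of_ediv_eq (by exact_mod_cast hL) h.2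
  rw [sub_sub_sub_cancel_right] at h₁ h₂
  simp only [l1, Prod.fst_sub, Prod.snd_sub]
  linarith

lemma cell_one (v p : ℤ × ℤ) : cell 1 v p = p - v := by
  simp [cell]
  rfl

lemma l1_sub_le_of_mem_box {d : ℕ} {p q : ℤ × ℤ}
    (hp : 1 ≤ p.1 ∧ p.1 ≤ 2 ^ d ∧ 1 ≤ p.2 ∧ p.2 ≤ 2 ^ d)
    (hq : 1 ≤ q.1 ∧ q.1 ≤ 2 ^ d ∧ 1 ≤ q.2 ∧ q.2 ≤ 2 ^ d) : l1 (p - q) ≤ 2 ^ (d + 1) := by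
  have h₁ : |p.1 - q.1| ≤ 2 ^ d := abs_sub_le_iff.2 ⟨by linarith, by linarith⟩
  have h₂ : |p.2 - q.2| ≤ 2 ^ d := abs_sub_le_iff.2 ⟨by linarith, by linarith⟩
  simp only [l1, Prod.fst_sub, Prod.snd_sub]
  linarith [pow_succ (2 : ℤ) d]

lemma D_eq_fiberImbalance {n : ℕ} (L : ℕ) (v : ℤ × ℤ) (a b : Fin n → ℤ × ℤ) :
    D L v a b = fiberImbalance (fun i => cell L v (a i)) (fun i => cell L v (b i)) := rfl

lemma D_nonneg {n : ℕ} (L : ℕ) (v : ℤ × ℤ) (a b : Fin n → ℤ × ℤ) : 0 ≤ D L v a b :=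
  sum_nonneg fun _ _ => abs_nonneg _

lemma D_one_of_forall_ne {n : ℕ} (v : ℤ × ℤ) {a b : Fin n → ℤ × ℤ} (hab : ∀ i j, a i ≠ b j) :
    D 1 v a b = 2 * n := by
  rw [D_eq_fiberImbalance, fiberImbalance_of_forall_ne, Fintype.card_fin]
  simpa [cell_one] using hab

lemma exists_matchCost_add_le_sum_D {n : ℕ} (a b : Fin n → ℤ × ℤ) (v : ℕ → ℤ × ℤ) (j : ℕ) :
    ∃ (σ : Equiv.Perm (Fin n)) (s : Finset (Fin n)),
      matchCost (fun i y => l1 (a i - y)) b σ s + #(univ.image b) * 2 ^ (j + 1) * (n - #s) ≤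
        #(univ.image b) * (2 * n + ∑ j' ∈ range j, 2 ^ j' * D (2 ^ j') (v j') a b) := by
  induction j with
  | zero => exact ⟨1, ∅, by simp [matchCost, mul_assoc]⟩
  | succ j ih =>
    obtain ⟨σ, s, hσs⟩ := ih
    obtain ⟨τ, t, hτt, hD⟩ := exists_perm_two_mul_sub_card_le_fiberImbalance
      (fun i => cell (2 ^ j) (v j) (a i)) (fun i => cell (2 ^ j) (v j) (b i))
    have ht : ∀ i ∈ t, l1 (a i - b (τ i)) ≤ 2 ^ (j + 1) := fun i hi => by
      have := l1_sub_le_of_cell_eq (Nat.two_pow_pos j) (hτt i hi)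
      push_cast at this
      linarith [pow_succ (2 : ℤ) j]
    obtain ⟨σ', s', hts', hcost⟩ := exists_card_le_matchCost_sub_le
      (fun i y => l1_nonneg (a i - y)) ht σ s
    refine ⟨σ', s', ?_⟩
    rw [← D_eq_fiberImbalance, Fintype.card_fin] at hD
    have hts'' : (#t : ℤ) ≤ #s' := by exact_mod_cast hts'
    have hP : (0 : ℤ) ≤ #(univ.image b) * 2 ^ j := by positivity
    have h₁ := mul_le_mul_of_nonneg_left hD hP
    have h₂ : (#(univ.image b) * 2 ^ j : ℤ) * (n - #s') ≤ #(univ.image b) * 2 ^ j * (n - #t) :=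
      mul_le_mul_of_nonneg_left (by linarith) hP
    rw [sum_range_succ]
    simp only [pow_succ] at hσs hcost ⊢
    linarith

lemma exists_perm_matchCost_le {n d : ℕ} {a b : Fin n → ℤ × ℤ}
    (hdiam : ∀ i, l1 (a i - b i) ≤ 2 ^ (d + 1)) (v : ℕ → ℤ × ℤ) :
    ∃ σ : Equiv.Perm (Fin n), matchCost (fun i y => l1 (a i - y)) b σ univ ≤
        #(univ.image b) * (2 * n + ∑ j ∈ range d, 2 ^ j * D (2 ^ j) (v j) a b) := by
  obtain ⟨σ, s, hσs⟩ := exists_matchCost_add_le_sum_D a b v d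
  obtain ⟨σ', s', hs', hcost⟩ := exists_card_le_matchCost_sub_le (τ := 1) (t := univ) (b := b)
    (fun i y => l1_nonneg (a i - y)) (fun i _ => hdiam i) σ s
  rw [card_univ, Fintype.card_fin] at hs'
  have hs'n : #s' = n := le_antisymm (card_le_univ s' |>.trans_eq (Fintype.card_fin n)) hs'
  rw [hs'n, eq_univ_of_card s' (hs'n.trans (Fintype.card_fin n).symm)] at hcost
  exact ⟨σ', by linarith⟩

lemma emd_le_two_mul_card_image_mul_sum {n d : ℕ} {a b : Fin n → ℤ × ℤ}
    (hdiam : ∀ i, l1 (a i - b i) ≤ 2 ^ (d + 1)) (hab : ∀ i j, a i ≠ b j) (v : ℕ → ℤ × ℤ) :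
    EMD a b ≤ 2 * #(univ.image b) * ∑ j ∈ range (d + 1), 2 ^ j * D (2 ^ j) (v j) a b := by
  obtain ⟨σ, hσ⟩ := exists_perm_matchCost_le hdiam v
  set S := ∑ j ∈ range (d + 1), (2 : ℤ) ^ j * D (2 ^ j) (v j) a b
  have hterm : ∀ j ∈ range (d + 1), 0 ≤ (2 : ℤ) ^ j * D (2 ^ j) (v j) a b :=
    fun j _ => mul_nonneg (by positivity) (D_nonneg _ _ _ _)
  have h₀ : 2 * (n : ℤ) ≤ S := by
    simpa [D_one_of_forall_ne (v 0) hab] using single_le_sum hterm (mem_range.2 d.succ_pos)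
  have h₁ : ∑ j ∈ range d, (2 : ℤ) ^ j * D (2 ^ j) (v j) a b ≤ S :=
    sum_le_sum_of_subset_of_nonneg (range_subset_range.2 d.le_succ) fun j hj _ => hterm j hj
  calc EMD a b ≤ matchCost (fun i y => l1 (a i - y)) b σ univ := inf'_le _ (mem_univ σ)
    _ ≤ #(univ.image b) * (2 * n + ∑ j ∈ range d, 2 ^ j * D (2 ^ j) (v j) a b) := hσ
    _ ≤ #(univ.image b) * (S + S) := by gcongr
    _ = 2 * #(univ.image b) * S := by ring

theorem emd_lower_bound_general (d n k : ℕ)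
    (a b : Fin n → ℤ × ℤ)
    (ha : ∀ i, 1 ≤ (a i).1 ∧ (a i).1 ≤ 2 ^ d ∧ 1 ≤ (a i).2 ∧ (a i).2 ≤ 2 ^ d)
    (hb : ∀ i, 1 ≤ (b i).1 ∧ (b i).1 ≤ 2 ^ d ∧ 1 ≤ (b i).2 ∧ (b i).2 ≤ 2 ^ d)
    (hT : (Finset.univ.image b).card ≤ k)
    (hab : ∀ i j, a i ≠ b j)
    (v : ℕ → ℤ × ℤ)
    (Y : ℝ)
    (hY : Y = (1 / 2 : ℝ) *
      ∑ j ∈ Finset.range (d + 1), (2 : ℝ) ^ j * (D (2 ^ j) (v j) a b : ℝ)) :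
    (EMD a b : ℝ) ≤ 4 * (k : ℝ) ^ 2 * Y := by
  set S := ∑ j ∈ range (d + 1), (2 : ℝ) ^ j * (D (2 ^ j) (v j) a b : ℝ) with hS_def
  have hEMD : (EMD a b : ℝ) ≤ 2 * #(univ.image b) * S := by
    rw [hS_def]
    exact_mod_cast emd_le_two_mul_card_image_mul_sum
      (fun i => l1_sub_le_of_mem_box (ha i) (hb i)) hab v
  have hS : 0 ≤ S :=
    sum_nonneg fun j _ => mul_nonneg (by positivity) (by exact_mod_cast D_nonneg _ _ _ _)
  have hk : (#(univ.image b) : ℝ) ≤ k ^ 2 := by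
    exact_mod_cast hT.trans (Nat.le_self_pow two_ne_zero k)
  calc (EMD a b : ℝ) ≤ 2 * #(univ.image b) * S := hEMD
    _ ≤ 2 * k ^ 2 * S := by gcongr
    _ = 4 * (k : ℝ) ^ 2 * Y := by rw [hY]; ring

/-- lower bound: with Δ = 2^d, k ≥ 1 a power of two, T with at most k
distinct points, disjoint S and T, arbitrary shifts v_j, and
Y = (1/2)·Σ_{j=0}^{d} 2^j·D_{2^j,v_j}(a,b), we have EMD(a,b) ≤ 4k²·Y. -/
theorem emd_lower_bound (d n k : ℕ) (hn : 1 ≤ n) (hk : ∃ t : ℕ, k = 2 ^ t)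
    (a b : Fin n → ℤ × ℤ)
    (ha : ∀ i, 1 ≤ (a i).1 ∧ (a i).1 ≤ 2 ^ d ∧ 1 ≤ (a i).2 ∧ (a i).2 ≤ 2 ^ d)
    (hb : ∀ i, 1 ≤ (b i).1 ∧ (b i).1 ≤ 2 ^ d ∧ 1 ≤ (b i).2 ∧ (b i).2 ≤ 2 ^ d)
    (hT : (Finset.univ.image b).card ≤ k)
    (hab : ∀ i j, a i ≠ b j)
    (v : ℕ → ℤ × ℤ)
    (hv : ∀ j ≤ d, 0 ≤ (v j).1 ∧ (v j).1 < 2 ^ j ∧ 0 ≤ (v j).2 ∧ (v j).2 < 2 ^ j)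
    (Y : ℝ)
    (hY : Y = (1 / 2 : ℝ) *
      ∑ j ∈ Finset.range (d + 1), (2 : ℝ) ^ j * (D (2 ^ j) (v j) a b : ℝ)) :
    (EMD a b : ℝ) ≤ 4 * (k : ℝ) ^ 2 * Y :=
  emd_lower_bound_general d n k a b ha hb hT hab v Y hY
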